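/- arXiv:1611.06031 — 4 statements merged into one kernel-verified Lean document; each statement's English description precedes it below -/
import Mathlib

section
/- For all integers n ≥ 2 and k ≥ ⌈n/3⌉ + 1, the complete bipartite graph K_{2,n} admits an equitable proper k-coloring; moreover, K_{2,n} has no equitable proper coloring with exactly ⌈n/3⌉ colors. Hence the equitable chromatic threshold of K_{2,n} equals ⌈n/3⌉ + 1. -/
/-!
The colour class of a vertex on the 2-side of `K_{2,n}` contains no vertex of the other side,
so it has at most 2 elements; equitability then caps every class at 3, and `⌈n/3⌉` classes hold
at most `3⌈n/3⌉ - 1 < n + 2` vertices. Conversely, for `k ≥ n + 2` any injective colouring is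
equitable, and for `⌈n/3⌉ < k ≤ n + 1` the 2-side gets one colour while the `n` other vertices are
dealt round-robin to the remaining `k - 1` colours, giving classes of `⌊n/(k-1)⌋` or
`⌈n/(k-1)⌉` vertices; both lie in `[1, 3]`, so all sizes are within one of each other and of 2.
-/

open Finset

section Equitable

variable {V : Type*} [Fintype V]

def IsEquitable {k : ℕ} (f : V → Fin k) : Prop :=
  (Set.univ : Set (Fin k)).EquitableOn fun i => #{v | f v = i}

theorem isEquitable_iff {k : ℕ} {f : V → Fin k} :
    IsEquitable f ↔ ∀ i j : Fin k, #{v | f v = i} ≤ #{v | f v = j} + 1 := by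
  simp [IsEquitable, Set.EquitableOn]

theorem isEquitable_iff_exists_le_le_add_one {k : ℕ} {f : V → Fin k} :
    IsEquitable f ↔ ∃ b, ∀ i, b ≤ #{v | f v = i} ∧ #{v | f v = i} ≤ b + 1 := by
  simp [IsEquitable, Set.equitableOn_iff_exists_le_le_add_one]

def SimpleGraph.EquitablyColorable (G : SimpleGraph V) (k : ℕ) : Prop :=
  ∃ f : V → Fin k, (∀ u v, G.Adj u v → f u ≠ f v) ∧ IsEquitable f

theorem IsEquitable.card_lt_mul {k : ℕ} {f : V → Fin k} (hf : IsEquitable f) (c : Fin k) :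
    Fintype.card V < k * (#{v | f v = c} + 1) := by
  classical
  calc Fintype.card V = ∑ i, #{v | f v = i} :=
        card_eq_sum_card_fiberwise fun v _ => mem_univ (f v)
    _ < ∑ _i : Fin k, (#{v | f v = c} + 1) :=
        sum_lt_sum (fun i _ => isEquitable_iff.mp hf i c) ⟨c, mem_univ c, Nat.lt_succ_self _⟩
    _ = k * (#{v | f v = c} + 1) := by simp

theorem isEquitable_of_injective {k : ℕ} {f : V → Fin k} (hf : f.Injective) : IsEquitable f :=
  isEquitable_iff_exists_le_le_add_one.mpr
    ⟨0, fun i => ⟨Nat.zero_le _, card_le_one.mpr fun a ha b hb => hf <| by simp_all⟩⟩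

theorem SimpleGraph.equitablyColorable_of_card_le (G : SimpleGraph V) {k : ℕ}
    (hk : Fintype.card V ≤ k) : G.EquitablyColorable k := by
  classical
  let f := Fin.castLE hk ∘ Fintype.equivFin V
  have hf : f.Injective := (Fin.castLE_injective hk).comp (Fintype.equivFin V).injective
  exact ⟨f, fun u v huv => hf.ne (G.ne_of_adj huv), isEquitable_of_injective hf⟩

end Equitable

theorem card_filter_sum {α β : Type*} [Fintype α] [Fintype β] (p : α ⊕ β → Prop)
    [DecidablePred p] : #{v | p v} = #{a | p (.inl a)} + #{b | p (.inr b)} := by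
  rw [← card_toLeft_add_card_toRight]
  congr 1 <;> (congr 1; ext x; simp)

theorem Fin.card_filter_val_mod_eq (n : ℕ) {r t : ℕ} (ht : t < r) :
    #{j : Fin n | (j : ℕ) % r = t} = n / r + if t < n % r then 1 else 0 := by
  have h := Nat.count_modEq_card (b := n) (Nat.zero_lt_of_lt ht) t
  rw [Nat.mod_eq_of_lt ht, Nat.count_eq_card_filter_range] at h
  rw [← h, ← card_map valEmbedding]
  congr 1
  ext x
  simp [Nat.ModEq, Nat.mod_eq_of_lt ht, Fin.exists_iff, and_comm]

theorem completeBipartiteGraph_two_equitablyColorable_succ {n r : ℕ} (hrn : r ≤ n)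
    (hnr : n ≤ 3 * r) : (completeBipartiteGraph (Fin 2) (Fin n)).EquitablyColorable (r + 1) := by
  let f : Fin 2 ⊕ Fin n → Fin (r + 1) :=
    Sum.elim (fun _ => 0) fun j => Fin.succ ⟨j % r, Nat.mod_lt _ (by have := j.isLt; omega)⟩
  have hcard_zero : #{v | f v = 0} = 2 := by simp [f, card_filter_sum]
  have hcard_succ (t : Fin r) :
      #{v | f v = t.succ} = n / r + if (t : ℕ) < n % r then 1 else 0 := by
    rw [← Fin.card_filter_val_mod_eq n t.isLt, card_filter_sum]
    simp [f, Fin.ext_iff, (Fin.succ_ne_zero t).symm]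
  have hdiv (hr : 0 < r) :
      1 ≤ n / r ∧ n / r ≤ 3 ∧ (n / r < 2 ↔ n < 2 * r) ∧ (n / r < 3 ∨ n % r = 0) := by
    refine ⟨(Nat.one_le_div_iff hr).mpr hrn, Nat.div_le_of_le_mul (by omega),
      Nat.div_lt_iff_lt_mul hr, or_iff_not_imp_left.mpr fun h => ?_⟩
    have : n = 3 * r := le_antisymm hnr ((Nat.le_div_iff_mul_le hr).mp (not_lt.mp h))
    simp [this]
  refine ⟨f, ?_, isEquitable_iff_exists_le_le_add_one.mpr
    ⟨if n < 2 * r then 1 else 2, fun i => ?_⟩⟩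
  · rintro (a | b) (a' | b') hadj <;> simp_all [f]
  · cases i using Fin.cases with
    | zero =>
      rw [hcard_zero]
      split_ifs <;> omega
    | succ t =>
      have := hdiv t.pos
      rw [hcard_succ]
      split_ifs <;> omega

theorem completeBipartiteGraph_two_equitablyColorable {n k : ℕ} (hk : (n + 2) / 3 + 1 ≤ k) :
    (completeBipartiteGraph (Fin 2) (Fin n)).EquitablyColorable k := by
  by_cases hkn : n + 2 ≤ k
  · exact SimpleGraph.equitablyColorable_of_card_le _ (by simpa [add_comm] using hkn)
  obtain ⟨r, rfl⟩ : ∃ r, k = r + 1 := ⟨k - 1, by omega⟩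
  exact completeBipartiteGraph_two_equitablyColorable_succ (by omega) (by omega)

theorem completeBipartiteGraph_two_not_equitablyColorable (n : ℕ) :
    ¬ (completeBipartiteGraph (Fin 2) (Fin n)).EquitablyColorable ((n + 2) / 3) := by
  rintro ⟨f, hproper, hequit⟩
  set c := f (.inl 0)
  have hright : #{b : Fin n | f (.inr b) = c} = 0 :=
    card_eq_zero.mpr <| filter_eq_empty_iff.mpr fun b _ => hproper _ _ (by simp)
  have hc : #{v | f v = c} ≤ 2 := by
    rw [card_filter_sum, hright]
    simpa using card_le_univ (filter (fun a : Fin 2 => f (.inl a) = c) univ)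
  have hlt := hequit.card_lt_mul c
  simp only [Fintype.card_sum, Fintype.card_fin] at hlt
  have := Nat.mul_le_mul_left ((n + 2) / 3) (Nat.add_le_add_right hc 1)
  omega

theorem K2n_equitable_chromatic_threshold_general (n : ℕ) :
    (∀ k : ℕ, (n + 2) / 3 + 1 ≤ k →
      ∃ f : Fin 2 ⊕ Fin n → Fin k,
        (∀ u v, (completeBipartiteGraph (Fin 2) (Fin n)).Adj u v → f u ≠ f v) ∧
        (∀ i j : Fin k,
          (univ.filter fun v => f v = i).card ≤ (univ.filter fun v => f v = j).card + 1)) ∧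
    (¬ ∃ f : Fin 2 ⊕ Fin n → Fin ((n + 2) / 3),
        (∀ u v, (completeBipartiteGraph (Fin 2) (Fin n)).Adj u v → f u ≠ f v) ∧
        (∀ i j : Fin ((n + 2) / 3),
          (univ.filter fun v => f v = i).card ≤ (univ.filter fun v => f v = j).card + 1)) ∧
    IsLeast {m : ℕ | ∀ k : ℕ, m ≤ k →
      ∃ f : Fin 2 ⊕ Fin n → Fin k,
        (∀ u v, (completeBipartiteGraph (Fin 2) (Fin n)).Adj u v → f u ≠ f v) ∧
        (∀ i j : Fin k,
          (univ.filter fun v => f v = i).card ≤ (univ.filter fun v => f v = j).card + 1)}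
      ((n + 2) / 3 + 1) := by
  simp only [← isEquitable_iff]
  have hnot := completeBipartiteGraph_two_not_equitablyColorable n
  refine ⟨fun _ => completeBipartiteGraph_two_equitablyColorable, hnot,
    fun _ => completeBipartiteGraph_two_equitablyColorable, fun m hm => ?_⟩
  exact not_lt.mp fun hlt => hnot (hm _ (Nat.le_of_lt_succ hlt))

/-- For `n ≥ 2`, the graph `K_{2,n}` admits an equitable proper `k`-coloring
for every `k ≥ ⌈n/3⌉ + 1` (note `⌈n/3⌉ = (n+2)/3` in natural division), has no equitable
proper coloring with exactly `⌈n/3⌉` colors, and hence its equitable chromatic threshold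
is `⌈n/3⌉ + 1`. -/
theorem K2n_equitable_chromatic_threshold (n : ℕ) (hn : 2 ≤ n) :
    (∀ k : ℕ, (n + 2) / 3 + 1 ≤ k →
      ∃ f : Fin 2 ⊕ Fin n → Fin k,
        (∀ u v, (completeBipartiteGraph (Fin 2) (Fin n)).Adj u v → f u ≠ f v) ∧
        (∀ i j : Fin k,
          (univ.filter fun v => f v = i).card ≤ (univ.filter fun v => f v = j).card + 1)) ∧
    (¬ ∃ f : Fin 2 ⊕ Fin n → Fin ((n + 2) / 3),
        (∀ u v, (completeBipartiteGraph (Fin 2) (Fin n)).Adj u v → f u ≠ f v) ∧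
        (∀ i j : Fin ((n + 2) / 3),
          (univ.filter fun v => f v = i).card ≤ (univ.filter fun v => f v = j).card + 1)) ∧
    IsLeast {m : ℕ | ∀ k : ℕ, m ≤ k →
      ∃ f : Fin 2 ⊕ Fin n → Fin k,
        (∀ u v, (completeBipartiteGraph (Fin 2) (Fin n)).Adj u v → f u ≠ f v) ∧
        (∀ i j : Fin k,
          (univ.filter fun v => f v = i).card ≤ (univ.filter fun v => f v = j).card + 1)}
      ((n + 2) / 3 + 1) :=
  K2n_equitable_chromatic_threshold_general n
end

section
/- If a_1 ≥ a_2 ≥ … ≥ a_m and b_1 ≤ b_2 ≤ … ≤ b_m are sequences of natural numbers with a_1 − a_m ≤ 1 and b_m − b_1 ≤ 1, then the sequence (a_1 + b_1, a_2 + b_2, …, a_m + b_m) satisfies max_i (a_i + b_i) − min_i (a_i + b_i) ≤ 1. -/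
section
variable {ι α : Type*} [Preorder ι] [BoundedOrder ι] [AddCommMonoid α] [Preorder α]
  [IsOrderedAddMonoid α] {f : ι → α} {c : α}

theorem Monotone.apply_le_apply_add_of_top_le (hf : Monotone f) (hc : f ⊤ ≤ f ⊥ + c) (i j : ι) :
    f i ≤ f j + c :=
  calc f i ≤ f ⊤ := hf le_top
    _ ≤ f ⊥ + c := hc
    _ ≤ f j + c := add_le_add_left (hf bot_le) c

theorem Antitone.apply_le_apply_add_of_bot_le (hf : Antitone f) (hc : f ⊥ ≤ f ⊤ + c) (i j : ι) :
    f i ≤ f j + c :=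
  hf.dual_left.apply_le_apply_add_of_top_le hc i j

end

/-- If `a` is nonincreasing with `a 0 − a last ≤ 1` and `b` is nondecreasing
with `b last − b 0 ≤ 1`, then the componentwise sums pairwise differ by at most one. -/
theorem sum_of_sorted_sequences_equitable (m : ℕ) (a b : Fin (m + 1) → ℕ)
    (ha : Antitone a) (hb : Monotone b)
    (ha1 : a 0 ≤ a (Fin.last m) + 1) (hb1 : b (Fin.last m) ≤ b 0 + 1) :
    ∀ i j : Fin (m + 1), a i + b i ≤ a j + b j + 1 := by
  -- `(0 : Fin (m + 1))` is `⊥` definitionally, so only `Fin.last m` needs rewriting.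
  rw [← Fin.top_eq_last] at ha1 hb1
  intro i j
  rcases le_total i j with hij | hji
  · have := add_le_add (ha.apply_le_apply_add_of_bot_le ha1 i j) (hb hij)
    omega
  · have := add_le_add (ha hji) (hb.apply_le_apply_add_of_top_le hb1 i j)
    omega
end

section
/- Let m ≥ 3 and let P = y_0 y_1 … y_t y_{t+1} be a path with t ∈ {4,5} internal vertices, where y_0 and y_{t+1} have fixed colors c_0 and c_{t+1} in {1,…,m} (not necessarily distinct). Suppose m ≥ t. Then for any internal vertex x = y_i (1 ≤ i ≤ t) and any two forbidden colors a, b ∈ {1,…,m}, there is an assignment of t pairwise distinct colors from {1,…,t} ⊆ {1,…,m} to y_1,…,y_t such that adjacent vertices on P (including the endpoints with their fixed colors) receive different colors and the color of x is not in {a,b}. -/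
/-! Only the two end vertices and the designated vertex carry constraints: the colours are
pairwise distinct, so every edge between internal vertices is proper. Colour greedily, most
constrained vertex first. The designated vertex excludes at most three colours (`a`, `b`, and
an endpoint colour if it is an end vertex); each remaining end vertex excludes its neighbour's
colour and the at most two colours already used. With `t ≥ 4` colours a choice always remains,
and each choice is realised on a permutation of `{0, …, t - 1}` by a swap that does not disturb
the earlier choices. -/

open Finset

section PermAvoiding

variable {α β : Type*} [Fintype α] [DecidableEq α] (e : α ↪ β)

lemma exists_perm_extend_avoiding (σ : Equiv.Perm α) {s : Finset α} {p : α} (hp : p ∉ s)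
    {F : Finset β} (hF : #F + #s < Fintype.card α) :
    ∃ τ : Equiv.Perm α, e (τ p) ∉ F ∧ ∀ q ∈ s, τ q = σ q := by
  have hcard : #(F.preimage e e.injective.injOn ∪ s.map σ.toEmbedding) < #(univ : Finset α) :=
    calc _ ≤ #F + #s := by
          grw [card_union_le, card_map,
            card_le_card_of_injOn e (fun _ ↦ mem_preimage.1) e.injective.injOn]
      _ < _ := by rwa [card_univ]
  obtain ⟨v, -, hv⟩ := exists_mem_notMem_of_card_lt_card hcard
  simp only [mem_union, mem_preimage, mem_map_equiv, not_or] at hv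
  refine ⟨Equiv.swap (σ p) v * σ, by simpa using hv.1, fun q hq => ?_⟩
  have hqp : σ q ≠ σ p := σ.injective.ne (ne_of_mem_of_not_mem hq hp)
  have hqv : σ q ≠ v := fun h => hv.2 (by simpa [← h] using hq)
  exact Equiv.swap_apply_of_ne_of_ne hqp hqv

lemma exists_perm_avoiding_two {p₁ p₂ : α} (hp : p₁ ≠ p₂) {F₁ F₂ : Finset β}
    (h₁ : #F₁ < Fintype.card α) (h₂ : #F₂ + 1 < Fintype.card α) :
    ∃ σ : Equiv.Perm α, e (σ p₁) ∉ F₁ ∧ e (σ p₂) ∉ F₂ := by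
  obtain ⟨σ, hσ, -⟩ := exists_perm_extend_avoiding e 1 (notMem_empty p₁) (s := ∅) (by simpa)
  obtain ⟨τ, hτ, hτσ⟩ := exists_perm_extend_avoiding e σ (notMem_singleton.2 hp.symm)
    (by simpa using h₂)
  exact ⟨τ, by rwa [hτσ p₁ (mem_singleton_self p₁)], hτ⟩

lemma exists_perm_avoiding_three {p₁ p₂ p₃ : α} (h₁₂ : p₁ ≠ p₂) (h₁₃ : p₁ ≠ p₃)
    (h₂₃ : p₂ ≠ p₃) {F₁ F₂ F₃ : Finset β} (h₁ : #F₁ < Fintype.card α)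
    (h₂ : #F₂ + 1 < Fintype.card α) (h₃ : #F₃ + 2 < Fintype.card α) :
    ∃ σ : Equiv.Perm α, e (σ p₁) ∉ F₁ ∧ e (σ p₂) ∉ F₂ ∧ e (σ p₃) ∉ F₃ := by
  obtain ⟨σ, hσ₁, hσ₂⟩ := exists_perm_avoiding_two e h₁₂ h₁ h₂
  have hp₃ : p₃ ∉ ({p₁, p₂} : Finset α) := by simp [h₁₃.symm, h₂₃.symm]
  obtain ⟨τ, hτ, hτσ⟩ := exists_perm_extend_avoiding e σ hp₃
    (h₃.trans_le' (by gcongr; exact card_le_two))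
  refine ⟨τ, ?_, ?_, hτ⟩
  · rwa [hτσ p₁ (by simp)]
  · rwa [hτσ p₂ (by simp)]

end PermAvoiding

-- Colours are `Fin m` counted from 0, and `f j` is the colour of `y_{j+1}`.
/-- (Lemma 3.1, case `m ≥ t`.) For a path `y₀ y₁ … y_t y_{t+1}` with
`t ∈ {4,5}`, `m ≥ max(3,t)`, endpoint colors `c₀, c_{t+1}`, a designated internal vertex
`y_{i+1}` (given by `i : Fin t`) and two forbidden colors `a, b`, one can assign `t`
pairwise distinct colors from `{0,…,t−1} ⊆ Fin m` to `y₁,…,y_t` (here `f j` is the color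
of `y_{j+1}`) so that the coloring of the path is proper, and the designated vertex avoids
`a` and `b`. -/
theorem thread_extension_m_ge_t (m t : ℕ) (ht : t = 4 ∨ t = 5) (hmt : t ≤ m)
    (c₀ cend a b : Fin m) (i : Fin t) :
    ∃ f : Fin t → Fin m,
      Function.Injective f ∧
      (∀ j : Fin t, (f j : ℕ) < t) ∧
      f ⟨0, by omega⟩ ≠ c₀ ∧
      f ⟨t - 1, by omega⟩ ≠ cend ∧
      f i ≠ a ∧ f i ≠ b := by
  have ht4 : 4 ≤ Fintype.card (Fin t) := by rw [Fintype.card_fin]; omega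
  set e := Fin.castLEEmb hmt
  set p₀ : Fin t := ⟨0, by omega⟩
  set pₗ : Fin t := ⟨t - 1, by omega⟩
  suffices ∃ σ : Equiv.Perm (Fin t),
      e (σ p₀) ≠ c₀ ∧ e (σ pₗ) ≠ cend ∧ e (σ i) ≠ a ∧ e (σ i) ≠ b by
    obtain ⟨σ, h₀, hₗ, ha, hb⟩ := this
    exact ⟨e ∘ σ, e.injective.comp σ.injective, fun j => (σ j).isLt, h₀, hₗ, ha, hb⟩
  have h₀ₗ : p₀ ≠ pₗ := Fin.ne_of_val_ne (by simp [p₀, pₗ]; omega)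
  have hcard₂ : #({a, b} : Finset (Fin m)) < Fintype.card (Fin t) := by grw [card_le_two]; omega
  have hcard₃ (c : Fin m) : #({a, b, c} : Finset (Fin m)) < Fintype.card (Fin t) := by
    grw [card_le_three]; omega
  have hcard₁ (c : Fin m) {k : ℕ} (hk : k ≤ 2) :
      #({c} : Finset (Fin m)) + k < Fintype.card (Fin t) := by
    rw [card_singleton]; omega
  by_cases hi₀ : i = p₀
  · obtain ⟨σ, h₀, hₗ⟩ := exists_perm_avoiding_two e h₀ₗ (hcard₃ c₀) (hcard₁ cend (by norm_num))
    simp only [mem_insert, mem_singleton, not_or] at h₀ hₗ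
    exact ⟨σ, h₀.2.2, hₗ, hi₀ ▸ h₀.1, hi₀ ▸ h₀.2.1⟩
  by_cases hiₗ : i = pₗ
  · obtain ⟨σ, hₗ, h₀⟩ :=
      exists_perm_avoiding_two e h₀ₗ.symm (hcard₃ cend) (hcard₁ c₀ (by norm_num))
    simp only [mem_insert, mem_singleton, not_or] at h₀ hₗ
    exact ⟨σ, h₀, hₗ.2.2, hiₗ ▸ hₗ.1, hiₗ ▸ hₗ.2.1⟩
  obtain ⟨σ, hi, h₀, hₗ⟩ := exists_perm_avoiding_three e hi₀ hiₗ h₀ₗ hcard₂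
    (hcard₁ c₀ (by norm_num)) (hcard₁ cend le_rfl)
  simp only [mem_insert, mem_singleton, not_or] at hi h₀ hₗ
  exact ⟨σ, h₀, hₗ, hi⟩
end

section
/- Let x be a vertex with fixed color c_x ∈ {1,…,m} (m ≥ 3), and let y, z be vertices with fixed colors c_y, c_z such that c_x ∉ {c_y, c_z}. Consider the paths x y_1 y_2 y and x y_3 z (so y_1, y_2, y_3 are new vertices; y_1 and y_3 are adjacent to x). Then one can assign the three colors 1, 2, 3 bijectively to y_2, y_3, y_1 respectively in some order so that the resulting coloring is proper: the color of y_1 differs from c_x and from the color of y_2, the color of y_2 differs from c_y, and the color of y_3 differs from c_x and c_z. -/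
/-! Give `y₃` a color of the palette avoiding `c_x` and `c_z`; the two remaining colors go to
`y₁, y₂` in either order, and since `c_x ≠ c_y` at most one of the two orders is improper. -/

open Finset

section ThreeColors

variable {α : Type*}

lemma exists_order_ne_ne {p q a b : α} (hpq : p ≠ q) (hab : a ≠ b) :
    ∃ g₁ g₂ : α, (g₁ = p ∧ g₂ = q ∨ g₁ = q ∧ g₂ = p) ∧ g₁ ≠ a ∧ g₂ ≠ b := by
  by_cases h : p ≠ a ∧ q ≠ b
  · exact ⟨p, q, .inl ⟨rfl, rfl⟩, h⟩
  · exact ⟨q, p, .inr ⟨rfl, rfl⟩, by grind⟩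

variable [DecidableEq α]

lemma exists_mem_ne_ne_of_two_lt_card {s : Finset α} (hs : 2 < #s) (a b : α) :
    ∃ r ∈ s, r ≠ a ∧ r ≠ b := by
  have : 0 < #((s.erase a).erase b) := by
    have := pred_card_le_card_erase (s := s) (a := a)
    have := pred_card_le_card_erase (s := s.erase a) (a := b)
    omega
  obtain ⟨r, hr⟩ := card_pos.1 this
  simp only [mem_erase] at hr
  exact ⟨r, hr.2.2, hr.2.1, hr.1⟩

theorem exists_two_one_thread_coloring {s : Finset α} (hs : #s = 3) {cx cy : α}
    (hxy : cx ≠ cy) (cz : α) :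
    ∃ g₁ ∈ s, ∃ g₂ ∈ s, ∃ g₃ ∈ s, g₁ ≠ g₂ ∧ g₁ ≠ g₃ ∧ g₂ ≠ g₃ ∧
      g₁ ≠ cx ∧ g₂ ≠ cy ∧ g₃ ≠ cx ∧ g₃ ≠ cz := by
  obtain ⟨g₃, hg₃, hg₃x, hg₃z⟩ := exists_mem_ne_ne_of_two_lt_card (by omega : 2 < #s) cx cz
  obtain ⟨p, q, hpq, hrest⟩ :=
    card_eq_two.1 (by rw [card_erase_of_mem hg₃, hs] : #(s.erase g₃) = 2)
  have hp : p ∈ s.erase g₃ := hrest ▸ mem_insert_self p {q}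
  have hq : q ∈ s.erase g₃ := hrest ▸ mem_insert_of_mem (mem_singleton_self q)
  rw [mem_erase] at hp hq
  obtain ⟨g₁, g₂, hg | hg, hg₁x, hg₂y⟩ := exists_order_ne_ne hpq hxy <;>
    obtain ⟨rfl, rfl⟩ := hg
  · exact ⟨g₁, hp.2, g₂, hq.2, g₃, hg₃, hpq, hp.1, hq.1, hg₁x, hg₂y, hg₃x, hg₃z⟩
  · exact ⟨g₁, hq.2, g₂, hp.2, g₃, hg₃, hpq.symm, hq.1, hp.1, hg₁x, hg₂y, hg₃x, hg₃z⟩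

end ThreeColors

theorem two_one_thread_extension_general (m : ℕ) (hm : 3 ≤ m) (cx cy cz : Fin m)
    (hxy : cx ≠ cy) :
    ∃ g₁ g₂ g₃ : Fin m,
      (g₁ : ℕ) < 3 ∧ (g₂ : ℕ) < 3 ∧ (g₃ : ℕ) < 3 ∧
      g₁ ≠ g₂ ∧ g₁ ≠ g₃ ∧ g₂ ≠ g₃ ∧
      g₁ ≠ cx ∧ g₂ ≠ cy ∧ g₃ ≠ cx ∧ g₃ ≠ cz := by
  let colors : Finset (Fin m) := (range 3).attachFin fun k hk => by
    rw [mem_range] at hk; omega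
  have hcard : #colors = 3 := by simp [colors]
  have hlt : ∀ g ∈ colors, (g : ℕ) < 3 := fun g hg => by simpa [colors] using hg
  obtain ⟨g₁, h₁, g₂, h₂, g₃, h₃, hne⟩ := exists_two_one_thread_coloring hcard hxy cz
  exact ⟨g₁, g₂, g₃, hlt g₁ h₁, hlt g₂ h₂, hlt g₃ h₃, hne⟩

/-- (Lemma 3.3.) Given fixed colors `c_x, c_y, c_z ∈ Fin m` (`m ≥ 3`) with
`c_x ∉ {c_y, c_z}`, the internal vertices of the 2-thread `x y₁ y₂ y` and the 1-thread
`x y₃ z` can be colored bijectively with the three colors `{0,1,2}` (here `g₁, g₂, g₃` are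
the colors of `y₁, y₂, y₃`) so that the coloring is proper. -/
theorem two_one_thread_extension (m : ℕ) (hm : 3 ≤ m) (cx cy cz : Fin m)
    (hxy : cx ≠ cy) (hxz : cx ≠ cz) :
    ∃ g₁ g₂ g₃ : Fin m,
      (g₁ : ℕ) < 3 ∧ (g₂ : ℕ) < 3 ∧ (g₃ : ℕ) < 3 ∧
      g₁ ≠ g₂ ∧ g₁ ≠ g₃ ∧ g₂ ≠ g₃ ∧
      g₁ ≠ cx ∧ g₂ ≠ cy ∧ g₃ ≠ cx ∧ g₃ ≠ cz :=
  two_one_thread_extension_general m hm cx cy cz hxy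
end
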